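/- Let Θ = Q_Θ Λ_Θ Q_Θ^T with Q_Θ a p×p orthogonal matrix and Λ_Θ diagonal with entries λ_{Θ,1} ≤ … ≤ λ_{Θ,p}, and let λ_{Ψ,1} ≤ … ≤ λ_{Ψ,q} be reals with λ_{Θ,1} + λ_{Ψ,1} > 0. Fix 1 ≤ K ≤ q, set Ξ_{Θ,k} = (Λ_Θ + λ_{Ψ,k} I_p)^{-1}, and define the approximate Hessian block Ĥ_Θ = (Q_Θ⊗Q_Θ)·( Σ_{k=1}^K Ξ_{Θ,k}⊗Ξ_{Θ,k} + (q−K)·Ξ_{Θ,K}⊗Ξ_{Θ,K} )·(Q_Θ⊗Q_Θ)^T. Then Ĥ_Θ is symmetric positive definite, its smallest eigenvalue equals Σ_{i=1}^K (λ_{Θ,p} + λ_{Ψ,i})^{-2} + (q−K)(λ_{Θ,p} + λ_{Ψ,K})^{-2}, and its largest eigenvalue equals Σ_{i=1}^K (λ_{Θ,1} + λ_{Ψ,i})^{-2} + (q−K)(λ_{Θ,1} + λ_{Ψ,K})^{-2}. -/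

import Mathlib

/-!
Each `Λ_Θ + λ_{Ψ,k} I_p` is diagonal, so every `Ξ_{Θ,k} ⊗ Ξ_{Θ,k}` is diagonal with entry
`(λ_{Θ,a} + λ_{Ψ,k})⁻¹ (λ_{Θ,b} + λ_{Ψ,k})⁻¹` at `(a, b)`. Hence `Ĥ_Θ` is the conjugate of a
positive diagonal matrix by the orthogonal matrix `Q_Θ ⊗ Q_Θ`: it is positive definite and its
eigenvalues are exactly the diagonal entries. Each entry is antitone in `λ_{Θ,a}` and `λ_{Θ,b}`,
so the extremes are attained at `a = b = p` (smallest) and `a = b = 1` (largest).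
-/

open Matrix
open scoped Kronecker

namespace EiGLasso

/-- The Kronecker sum `Θ ⊕ Ψ = Θ ⊗ I_q + I_p ⊗ Ψ`. -/
def kronSum {p q : ℕ} (A : Matrix (Fin p) (Fin p) ℝ) (B : Matrix (Fin q) (Fin q) ℝ) :
    Matrix (Fin p × Fin q) (Fin p × Fin q) ℝ :=
  A ⊗ₖ (1 : Matrix (Fin q) (Fin q) ℝ) + (1 : Matrix (Fin p) (Fin p) ℝ) ⊗ₖ B

/-- The `pq × p` selection matrix `I_p ⊗ e_{q,i}`, where `e_{q,i}` is the `i`-th one-hot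
vector in `ℝ^q`.  Row `(j', i')` (i.e. row `(j'-1)q + i'`), column `j`. -/
def selTheta (p q : ℕ) (i : Fin q) : Matrix (Fin p × Fin q) (Fin p) ℝ :=
  Matrix.of fun x j => if x = (j, i) then (1 : ℝ) else 0

/-- The `pq × q` selection matrix `e_{p,j} ⊗ I_q`. -/
def selPsi (p q : ℕ) (j : Fin p) : Matrix (Fin p × Fin q) (Fin q) ℝ :=
  Matrix.of fun x i => if x = (j, i) then (1 : ℝ) else 0

/-- `P_Θ = ∑_{i=1}^q I_p ⊗ e_{q,i} ⊗ I_p ⊗ e_{q,i}`, a `p²q² × p²` matrix. -/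
def Ptheta (p q : ℕ) : Matrix ((Fin p × Fin q) × (Fin p × Fin q)) (Fin p × Fin p) ℝ :=
  ∑ i : Fin q, (selTheta p q i) ⊗ₖ (selTheta p q i)

/-- `P_Ψ = ∑_{j=1}^p e_{p,j} ⊗ I_q ⊗ e_{p,j} ⊗ I_q`, a `p²q² × q²` matrix. -/
def Ppsi (p q : ℕ) : Matrix ((Fin p × Fin q) × (Fin p × Fin q)) (Fin q × Fin q) ℝ :=
  ∑ j : Fin p, (selPsi p q j) ⊗ₖ (selPsi p q j)

/-- Column-stacking vectorization: `vec(A)` at index `(j, i)` (i.e. `(j-1)m + i`) is `A i j`. -/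
def vec {m n : Type*} (A : Matrix m n ℝ) : n × m → ℝ := fun x => A x.2 x.1


/-- `Ξ_{Θ,k} = (Λ_Θ + λ_{Ψ,k} I_p)⁻¹`. -/
noncomputable def Xi {p : ℕ} (dθ : Fin p → ℝ) (lamψ : ℝ) : Matrix (Fin p) (Fin p) ℝ :=
  (diagonal dθ + lamψ • (1 : Matrix (Fin p) (Fin p) ℝ))⁻¹

/-- The approximate Hessian block
`Ĥ_Θ = (Q_Θ⊗Q_Θ)(∑_{k=1}^K Ξ_{Θ,k}⊗Ξ_{Θ,k} + (q−K) Ξ_{Θ,K}⊗Ξ_{Θ,K})(Q_Θ⊗Q_Θ)ᵀ`. -/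
noncomputable def approxHTheta {p : ℕ} (q : ℕ) (Qθ : Matrix (Fin p) (Fin p) ℝ)
    (dθ : Fin p → ℝ) (dψ : Fin q → ℝ) (K : ℕ) (hK1 : 1 ≤ K) (hKq : K ≤ q) :
    Matrix (Fin p × Fin p) (Fin p × Fin p) ℝ :=
  (Qθ ⊗ₖ Qθ)
    * ((∑ k : Fin K, Xi dθ (dψ ⟨k.1, lt_of_lt_of_le k.isLt hKq⟩)
          ⊗ₖ Xi dθ (dψ ⟨k.1, lt_of_lt_of_le k.isLt hKq⟩))
        + ((q : ℝ) - (K : ℝ)) •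
          (Xi dθ (dψ ⟨K - 1, by omega⟩) ⊗ₖ Xi dθ (dψ ⟨K - 1, by omega⟩)))
    * (Qθ ⊗ₖ Qθ)ᵀ

end EiGLasso

namespace Matrix

theorem diagonal_finsetSum {n ι α : Type*} [DecidableEq n] [AddCommMonoid α]
    (s : Finset ι) (f : ι → n → α) : diagonal (∑ i ∈ s, f i) = ∑ i ∈ s, diagonal (f i) :=
  map_sum (diagonalAddMonoidHom n α) f s

variable {n : Type*} [Fintype n] [DecidableEq n]

theorem setOf_exists_mulVec_eq_smul_eq_spectrum {K : Type*} [Field K]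
    (A : Matrix n n K) :
    {μ : K | ∃ v : n → K, v ≠ 0 ∧ A *ᵥ v = μ • v} = spectrum K A := by
  ext μ
  rw [Set.mem_ofPred_eq, ← spectrum_toLin', ← Module.End.hasEigenvalue_iff_mem_spectrum]
  constructor
  · rintro ⟨v, hv0, hv⟩
    exact Module.End.hasEigenvalue_of_hasEigenvector
      ⟨Module.End.mem_eigenspace_iff.mpr (by rwa [toLin'_apply]), hv0⟩
  · intro hμ
    obtain ⟨v, hv⟩ := hμ.exists_hasEigenvector
    exact ⟨v, hv.2, by rw [← toLin'_apply, hv.apply_eq_smul]⟩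

theorem spectrum_mul_diagonal_mul_transpose {U : Matrix n n ℝ}
    (hU : U ∈ orthogonalGroup n ℝ) (g : n → ℝ) :
    spectrum ℝ (U * diagonal g * Uᵀ) = Set.range g := by
  rw [← spectrum_diagonal g]
  exact Unitary.spectrum_star_right_conjugate (U := ⟨U, hU⟩)

theorem posDef_mul_diagonal_mul_transpose {U : Matrix n n ℝ}
    (hU : U ∈ orthogonalGroup n ℝ) {g : n → ℝ} (hg : ∀ i, 0 < g i) :
    (U * diagonal g * Uᵀ).PosDef :=
  (IsUnit.posDef_star_right_conjugate_iff (Unitary.isUnit_coe (U := ⟨U, hU⟩))).mpr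
    (posDef_diagonal_iff.mpr hg)

end Matrix

namespace EiGLasso

theorem Xi_eq_diagonal {p : ℕ} {dθ : Fin p → ℝ} {c : ℝ} (h : ∀ a, dθ a + c ≠ 0) :
    Xi dθ c = diagonal fun a => (dθ a + c)⁻¹ := by
  rw [Xi, smul_one_eq_diagonal, diagonal_add]
  refine inv_eq_left_inv ?_
  rw [diagonal_mul_diagonal, ← diagonal_one]
  exact congrArg diagonal (funext fun a => inv_mul_cancel₀ (h a))

section ApproxHThetaEig

variable {q K : ℕ} (dψ : Fin q → ℝ) (hK1 : 1 ≤ K) (hKq : K ≤ q)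

/-- The eigenvalue of `Ĥ_Θ` on `Q_Θ e_a ⊗ Q_Θ e_b`, as a function of `s = λ_{Θ,a}` and
`t = λ_{Θ,b}`. -/
noncomputable def approxHThetaEig (s t : ℝ) : ℝ :=
  (∑ k : Fin K,
      (s + dψ ⟨k, lt_of_lt_of_le k.isLt hKq⟩)⁻¹ * (t + dψ ⟨k, lt_of_lt_of_le k.isLt hKq⟩)⁻¹)
    + ((q : ℝ) - K) * ((s + dψ ⟨K - 1, by omega⟩)⁻¹ * (t + dψ ⟨K - 1, by omega⟩)⁻¹)

theorem approxHThetaEig_self (s : ℝ) :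
    approxHThetaEig dψ hK1 hKq s s =
      (∑ k : Fin K, ((s + dψ ⟨k, lt_of_lt_of_le k.isLt hKq⟩) ^ 2)⁻¹)
        + ((q : ℝ) - K) * ((s + dψ ⟨K - 1, by omega⟩) ^ 2)⁻¹ := by
  simp only [approxHThetaEig, sq, mul_inv]

variable {dψ}

theorem approxHThetaEig_pos {s t : ℝ} (hs : ∀ k, 0 < s + dψ k) (ht : ∀ k, 0 < t + dψ k) :
    0 < approxHThetaEig dψ hK1 hKq s t := by
  have : Nonempty (Fin K) := ⟨⟨0, hK1⟩⟩
  have hqK : (0 : ℝ) ≤ q - K := sub_nonneg.mpr (Nat.cast_le.mpr hKq)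
  have hterm : ∀ k, 0 < (s + dψ k)⁻¹ * (t + dψ k)⁻¹ := fun k =>
    mul_pos (inv_pos.mpr (hs k)) (inv_pos.mpr (ht k))
  exact add_pos_of_pos_of_nonneg (Finset.sum_pos (fun k _ => hterm _) Finset.univ_nonempty)
    (mul_nonneg hqK (hterm _).le)

theorem approxHThetaEig_le_of_le {s t s' t' : ℝ} (hs : ∀ k, 0 < s + dψ k)
    (ht : ∀ k, 0 < t + dψ k) (hss' : s ≤ s') (htt' : t ≤ t') :
    approxHThetaEig dψ hK1 hKq s' t' ≤ approxHThetaEig dψ hK1 hKq s t := by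
  have hqK : (0 : ℝ) ≤ q - K := sub_nonneg.mpr (Nat.cast_le.mpr hKq)
  have hterm : ∀ k, (s' + dψ k)⁻¹ * (t' + dψ k)⁻¹ ≤ (s + dψ k)⁻¹ * (t + dψ k)⁻¹ := fun k =>
    mul_le_mul (inv_anti₀ (hs k) (by linarith)) (inv_anti₀ (ht k) (by linarith))
      (inv_pos.mpr (by linarith [ht k])).le (inv_pos.mpr (hs k)).le
  exact add_le_add (Finset.sum_le_sum fun k _ => hterm _) (mul_le_mul_of_nonneg_left (hterm _) hqK)

end ApproxHThetaEig

theorem approxHTheta_eq_conj_diagonal {p q : ℕ} (Qθ : Matrix (Fin p) (Fin p) ℝ)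
    {dθ : Fin p → ℝ} {dψ : Fin q → ℝ} (h : ∀ a k, dθ a + dψ k ≠ 0) {K : ℕ} (hK1 : 1 ≤ K)
    (hKq : K ≤ q) :
    approxHTheta q Qθ dθ dψ K hK1 hKq = (Qθ ⊗ₖ Qθ)
      * diagonal (fun x => approxHThetaEig dψ hK1 hKq (dθ x.1) (dθ x.2)) * (Qθ ⊗ₖ Qθ)ᵀ := by
  simp only [approxHTheta, Xi_eq_diagonal fun a => h a _, diagonal_kronecker_diagonal,
    ← diagonal_finsetSum, ← diagonal_smul, diagonal_add]
  congr 3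
  funext x
  simp only [Finset.sum_apply, Pi.smul_apply, smul_eq_mul, approxHThetaEig]

/-- The approximate Hessian block `Ĥ_Θ` is symmetric positive definite;
its smallest eigenvalue is `∑_{i=1}^K (λ_{Θ,p}+λ_{Ψ,i})⁻² + (q−K)(λ_{Θ,p}+λ_{Ψ,K})⁻²` and
its largest eigenvalue is `∑_{i=1}^K (λ_{Θ,1}+λ_{Ψ,i})⁻² + (q−K)(λ_{Θ,1}+λ_{Ψ,K})⁻²`. -/
theorem approxHessian_posdef_eigs (p q : ℕ) (hp : 1 ≤ p) (hq : 1 ≤ q)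
    (Qθ : Matrix (Fin p) (Fin p) ℝ) (hQθ : Qθ * Qθᵀ = 1)
    (dθ : Fin p → ℝ) (hdθ : Monotone dθ)
    (dψ : Fin q → ℝ) (hdψ : Monotone dψ)
    (hpos : 0 < dθ ⟨0, hp⟩ + dψ ⟨0, hq⟩)
    (K : ℕ) (hK1 : 1 ≤ K) (hKq : K ≤ q) :
    (approxHTheta q Qθ dθ dψ K hK1 hKq).IsSymm ∧
    (approxHTheta q Qθ dθ dψ K hK1 hKq).PosDef ∧
    IsLeast {μ : ℝ | ∃ v : (Fin p × Fin p) → ℝ, v ≠ 0 ∧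
        (approxHTheta q Qθ dθ dψ K hK1 hKq).mulVec v = μ • v}
      ((∑ i : Fin K, ((dθ ⟨p - 1, by omega⟩
            + dψ ⟨i.1, lt_of_lt_of_le i.isLt hKq⟩) ^ 2)⁻¹)
        + ((q : ℝ) - (K : ℝ))
            * ((dθ ⟨p - 1, by omega⟩ + dψ ⟨K - 1, by omega⟩) ^ 2)⁻¹) ∧
    IsGreatest {μ : ℝ | ∃ v : (Fin p × Fin p) → ℝ, v ≠ 0 ∧
        (approxHTheta q Qθ dθ dψ K hK1 hKq).mulVec v = μ • v}
      ((∑ i : Fin K, ((dθ ⟨0, hp⟩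
            + dψ ⟨i.1, lt_of_lt_of_le i.isLt hKq⟩) ^ 2)⁻¹)
        + ((q : ℝ) - (K : ℝ))
            * ((dθ ⟨0, hp⟩ + dψ ⟨K - 1, by omega⟩) ^ 2)⁻¹) := by
  have hθψ : ∀ a k, 0 < dθ a + dψ k := fun a k =>
    hpos.trans_le (add_le_add (hdθ (Fin.le_iff_val_le_val.mpr (Nat.zero_le _)))
      (hdψ (Fin.le_iff_val_le_val.mpr (Nat.zero_le _))))
  have hU : Qθ ⊗ₖ Qθ ∈ orthogonalGroup (Fin p × Fin p) ℝ :=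
    have hQ := (mem_orthogonalGroup_iff _ ℝ).mpr hQθ
    kronecker_mem_unitary hQ hQ
  have hH := approxHTheta_eq_conj_diagonal Qθ (fun a k => (hθψ a k).ne') hK1 hKq
  set g : Fin p × Fin p → ℝ := fun x => approxHThetaEig dψ hK1 hKq (dθ x.1) (dθ x.2)
  have hPD : (approxHTheta q Qθ dθ dψ K hK1 hKq).PosDef := by
    rw [hH]
    exact posDef_mul_diagonal_mul_transpose hU fun x =>
      approxHThetaEig_pos hK1 hKq (hθψ x.1) (hθψ x.2)
  have hspec : {μ : ℝ | ∃ v : (Fin p × Fin p) → ℝ, v ≠ 0 ∧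
      (approxHTheta q Qθ dθ dψ K hK1 hKq).mulVec v = μ • v} = Set.range g := by
    rw [setOf_exists_mulVec_eq_smul_eq_spectrum, hH, spectrum_mul_diagonal_mul_transpose hU]
  have hmin : ∀ x, g (⟨p - 1, by omega⟩, ⟨p - 1, by omega⟩) ≤ g x := fun x =>
    have hlast : ∀ a : Fin p, a ≤ ⟨p - 1, by omega⟩ := fun a =>
      Fin.le_iff_val_le_val.mpr (Nat.le_sub_one_of_lt a.isLt)
    approxHThetaEig_le_of_le hK1 hKq (hθψ x.1) (hθψ x.2) (hdθ (hlast x.1)) (hdθ (hlast x.2))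
  have hmax : ∀ x, g x ≤ g (⟨0, hp⟩, ⟨0, hp⟩) := fun x =>
    have hfirst : ∀ a : Fin p, ⟨0, hp⟩ ≤ a := fun a => Fin.le_iff_val_le_val.mpr (Nat.zero_le _)
    approxHThetaEig_le_of_le hK1 hKq (hθψ _) (hθψ _) (hdθ (hfirst x.1)) (hdθ (hfirst x.2))
  refine ⟨isHermitian_iff_isSymm.mp hPD.isHermitian, hPD, ?_, ?_⟩ <;>
    rw [hspec, ← approxHThetaEig_self dψ hK1 hKq]
  · exact ⟨⟨(⟨p - 1, by omega⟩, ⟨p - 1, by omega⟩), rfl⟩, Set.forall_mem_range.2 hmin⟩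
  · exact ⟨⟨(⟨0, hp⟩, ⟨0, hp⟩), rfl⟩, Set.forall_mem_range.2 hmax⟩

end EiGLasso
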